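/- arXiv:1409.0824 — 4 statements merged into one kernel-verified Lean document; each statement's English description precedes it below -/
import Mathlib

section
/- For all formulas φ, ψ, θ of L, the formula ◻(φ↔ψ) → (((φ⪰θ)↔(ψ⪰θ)) ∧ ((θ⪰φ)↔(θ⪰ψ))) is valid. -/
/-- Formulas of the preference language L, generated from sentential
variables by negation, conjunction, and the binary connective ⪰. -/
inductive Fml (α : Type) : Type where
  | var : α → Fml α
  | neg : Fml α → Fml α
  | conj : Fml α → Fml α → Fml α
  | succeq : Fml α → Fml α → Fml α

/-! ◇χ = χ ⪰ χ holds at every world or at none, according as ⟦χ⟧ is nonempty, so ◻(φ ↔ ψ)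
holds somewhere only if ⟦φ⟧ = ⟦ψ⟧. Since ⟦θ ⪰ χ⟧ depends only on the propositions ⟦θ⟧ and ⟦χ⟧,
φ and ψ are then interchangeable on either side of ⪰. -/

namespace Fml

variable {α : Type}

/-- φ∨ψ := ¬(¬φ∧¬ψ) -/
def disj (φ ψ : Fml α) : Fml α := neg (conj (neg φ) (neg ψ))
/-- φ→ψ := ¬φ∨ψ -/
def impl (φ ψ : Fml α) : Fml α := disj (neg φ) ψ
/-- φ↔ψ := (φ→ψ)∧(ψ→φ) -/
def iffF (φ ψ : Fml α) : Fml α := conj (impl φ ψ) (impl ψ φ)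
/-- φ≻ψ := (φ⪰ψ)∧¬(ψ⪰φ) -/
def succ (φ ψ : Fml α) : Fml α := conj (succeq φ ψ) (neg (succeq ψ φ))
/-- ⊤ := p→p for a fixed variable p -/
def topF (p : α) : Fml α := impl (var p) (var p)
/-- ⊥ := ¬⊤ -/
def botF (p : α) : Fml α := neg (topF p)
/-- ◻φ := ¬(¬φ⪰¬φ) -/
def box (φ : Fml α) : Fml α := neg (succeq (neg φ) (neg φ))
/-- ◇φ := φ⪰φ -/
def dia (φ : Fml α) : Fml α := succeq φ φ
/-- Conditional obligation C(φ,ψ) := (φ∧ψ) ≻ (φ∧¬ψ) -/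
def Cond (φ ψ : Fml α) : Fml α := succ (conj φ ψ) (conj φ (neg ψ))
/-- Obligation Oψ := C(⊤,ψ), where ⊤ uses the fixed variable p -/
def Ob (p : α) (ψ : Fml α) : Fml α := Cond (topF p) ψ
/-- Permission Pψ := ¬O¬ψ -/
def Perm (p : α) (ψ : Fml α) : Fml α := neg (Ob p (neg ψ))

end Fml

/-- A model (W,S,U,T): a nonempty set of worlds, a selection function
picking a member of each nonempty set of worlds, a real-valued utility
function, and a truth-assignment. -/
structure Model (α : Type) : Type 1 where
  W : Type
  nonempty : Nonempty W
  S : W → Set W → W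
  S_mem : ∀ (w : W) (A : Set W), A.Nonempty → S w A ∈ A
  U : W → ℝ
  T : α → Set W

open Classical in
/-- The proposition ⟦φ⟧_M expressed by φ in the model M. -/
noncomputable def sat {α : Type} (M : Model α) : Fml α → Set M.W
  | .var p => M.T p
  | .neg θ => (sat M θ)ᶜ
  | .conj θ ψ => sat M θ ∩ sat M ψ
  | .succeq θ ψ =>
      if sat M θ = ∅ ∨ sat M ψ = ∅ then ∅
      else {w | M.U (M.S w (sat M θ)) ≥ M.U (M.S w (sat M ψ))}

/-- φ ⊨ ψ : in every model, ⟦φ⟧ ⊆ ⟦ψ⟧. -/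
def Implies {α : Type} (φ ψ : Fml α) : Prop :=
  ∀ M : Model α, sat M φ ⊆ sat M ψ

/-- ⊨ φ : in every model, ⟦φ⟧ = W. -/
def Valid {α : Type} (φ : Fml α) : Prop :=
  ∀ M : Model α, sat M φ = Set.univ

/-! ◇χ = χ ⪰ χ holds at every world or at none, according as ⟦χ⟧ is nonempty, so ◻(φ ↔ ψ)
holds somewhere only if ⟦φ⟧ = ⟦ψ⟧. Since ⟦θ ⪰ χ⟧ depends only on the propositions ⟦θ⟧ and ⟦χ⟧,
φ and ψ are then interchangeable on either side of ⪰. -/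

namespace Fml

variable {α : Type} (M : Model α)

lemma mem_sat_impl (φ ψ : Fml α) (w : M.W) :
    w ∈ sat M (impl φ ψ) ↔ (w ∈ sat M φ → w ∈ sat M ψ) := by
  simp only [impl, disj, sat, Set.mem_compl_iff, Set.mem_inter_iff, not_and, not_not]

lemma mem_sat_iffF (φ ψ : Fml α) (w : M.W) :
    w ∈ sat M (iffF φ ψ) ↔ (w ∈ sat M φ ↔ w ∈ sat M ψ) := by
  simp only [iffF, sat, Set.mem_inter_iff, mem_sat_impl]
  exact iff_iff_implies_and_implies.symm

lemma sat_iffF_eq_univ_iff (φ ψ : Fml α) :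
    sat M (iffF φ ψ) = Set.univ ↔ sat M φ = sat M ψ := by
  simp only [Set.ext_iff, mem_sat_iffF, Set.mem_univ, iff_true]

lemma sat_dia_eq_univ (φ : Fml α) (h : sat M φ ≠ ∅) : sat M (dia φ) = Set.univ := by
  simp only [dia, sat, h, or_self, if_false, ge_iff_le, le_refl, Set.ofPred_true]

lemma mem_sat_box {φ : Fml α} {w : M.W} : w ∈ sat M (box φ) ↔ sat M φ = Set.univ := by
  rw [box, sat, Set.mem_compl_iff, ← Set.compl_empty_iff]
  constructor
  · intro hw
    by_contra hne
    exact hw (sat_dia_eq_univ M (neg φ) hne ▸ Set.mem_univ w)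
  · intro hempty hw
    have hneg : sat M (neg φ) = ∅ := hempty
    rwa [sat, if_pos (Or.inl hneg)] at hw

lemma sat_succeq_congr {φ φ' ψ ψ' : Fml α} (hφ : sat M φ = sat M φ')
    (hψ : sat M ψ = sat M ψ') : sat M (succeq φ ψ) = sat M (succeq φ' ψ') := by
  simp only [sat, hφ, hψ]

end Fml

theorem stmt_4_general {α : Type} (φ ψ θ : Fml α) :
    Valid (Fml.impl (Fml.box (Fml.iffF φ ψ))
      (Fml.conj
        (Fml.iffF (Fml.succeq φ θ) (Fml.succeq ψ θ))
        (Fml.iffF (Fml.succeq θ φ) (Fml.succeq θ ψ)))) := by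
  intro M
  refine Set.eq_univ_of_forall fun w => (Fml.mem_sat_impl M _ _ w).2 fun hbox => ?_
  have hφψ : sat M φ = sat M ψ := (Fml.sat_iffF_eq_univ_iff M φ ψ).1 (Fml.mem_sat_box M |>.1 hbox)
  have hθ : sat M θ = sat M θ := rfl
  refine ⟨?_, ?_⟩
  · rw [Fml.mem_sat_iffF, Fml.sat_succeq_congr M hφψ hθ]
  · rw [Fml.mem_sat_iffF, Fml.sat_succeq_congr M hθ hφψ]

theorem stmt_4 {α : Type} [Nonempty α] (φ ψ θ : Fml α) :
    Valid (Fml.impl (Fml.box (Fml.iffF φ ψ))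
      (Fml.conj
        (Fml.iffF (Fml.succeq φ θ) (Fml.succeq ψ θ))
        (Fml.iffF (Fml.succeq θ φ) (Fml.succeq θ ψ)))) :=
  stmt_4_general φ ψ θ
end

section
/- Let p and q be distinct sentential variables. Then Op ∧ (¬p ≻ ¬q) ⊨_Δ Oq, i.e., in every Δ model M, ⟦Op ∧ (¬p ≻ ¬q)⟧_M ⊆ ⟦Oq⟧_M. -/
/-- S is a selection function on W = 𝒫(Props): for each world w and
nonempty set A of worlds, S w A ∈ A. -/
def IsSelection {α : Type} (S : Set α → Set (Set α) → Set α) : Prop :=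
  ∀ (w : Set α) (A : Set (Set α)), A.Nonempty → S w A ∈ A

/-- S is Δ-based: no w₁ ∈ A has w Δ w₁ properly included in w Δ S(w,A). -/
def DeltaBased {α : Type} (S : Set α → Set (Set α) → Set α) : Prop :=
  ∀ (w : Set α) (A : Set (Set α)), A.Nonempty →
    ¬ ∃ w1 ∈ A, symmDiff w w1 ⊂ symmDiff w (S w A)

/-- A Δ model: W = 𝒫(Props), T(p) = {w | p ∈ w}, and a Δ-based
selection function. -/
structure DeltaModel (α : Type) : Type where
  S : Set α → Set (Set α) → Set α
  S_mem : ∀ (w : Set α) (A : Set (Set α)), A.Nonempty → S w A ∈ A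
  delta : DeltaBased S
  U : Set α → ℝ

/-- The underlying model of a Δ model. -/
def DeltaModel.toModel {α : Type} (M : DeltaModel α) : Model α where
  W := Set α
  nonempty := ⟨∅⟩
  S := M.S
  S_mem := M.S_mem
  U := M.U
  T := fun p => {w : Set α | p ∈ w}

/-- φ ⊨_Δ ψ : in every Δ model, ⟦φ⟧ ⊆ ⟦ψ⟧. -/
def DeltaImplies {α : Type} (φ ψ : Fml α) : Prop :=
  ∀ M : DeltaModel α, sat M.toModel φ ⊆ sat M.toModel ψ

/-- The g-distance between two worlds: the (possibly infinite) sum of the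
weights of the variables in their symmetric difference. -/
noncomputable def gdist {α : Type} (g : α → ℝ) (w0 w1 : Set α) : ENNReal :=
  ∑' v : ↥(symmDiff w0 w1), ENNReal.ofReal (g v)

/-- S is g-based: no w' ∈ A is strictly g-closer to w than S(w,A). -/
def GBased {α : Type} (g : α → ℝ) (S : Set α → Set (Set α) → Set α) : Prop :=
  ∀ (w : Set α) (A : Set (Set α)), A.Nonempty →
    ¬ ∃ w' ∈ A, gdist g w w' < gdist g w (S w A)


/-!
In a Δ model the selection function is forced on literals: from `w`, the closest `r`-world is
`insert r w` and the closest `¬r`-world is `w \ {r}`. Hence `O r` holds at `w` iff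
`U (w \ {r}) < U (insert r w)`, and `¬p ≻ ¬q` holds iff `U (w \ {q}) < U (w \ {p})`.
From `O p` we get `U (w \ {p}) ≤ U w`. If `q ∉ w`, then `w \ {q} = w` and `¬p ≻ ¬q` gives
`U w < U (w \ {p})`, a contradiction; so `q ∈ w`, `insert q w = w`, and
`U (w \ {q}) < U (w \ {p}) ≤ U w` is exactly `O q`.
-/

open Set Fml

section Semantics

variable {α : Type} (M : Model α)

@[simp]
lemma sat_topF (p : α) : sat M (topF p) = univ := by
  ext
  simp [sat, topF, impl, disj]

lemma mem_sat_succ_iff {φ ψ : Fml α} (hφ : (sat M φ).Nonempty) (hψ : (sat M ψ).Nonempty)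
    (w : M.W) : w ∈ sat M (succ φ ψ) ↔ M.U (M.S w (sat M ψ)) < M.U (M.S w (sat M φ)) := by
  simp only [succ, sat, hφ.ne_empty, hψ.ne_empty, or_self, if_false, mem_inter_iff, mem_compl_iff,
    mem_ofPred_eq, not_le]
  exact and_iff_right_of_imp le_of_lt

lemma mem_sat_Ob_iff (p : α) {ψ : Fml α} (hψ : (sat M ψ).Nonempty)
    (hψc : (sat M ψ)ᶜ.Nonempty) (w : M.W) :
    w ∈ sat M (Ob p ψ) ↔ M.U (M.S w (sat M ψ)ᶜ) < M.U (M.S w (sat M ψ)) := by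
  have hpos : sat M (conj (topF p) ψ) = sat M ψ := by simp [sat]
  have hneg : sat M (conj (topF p) (neg ψ)) = (sat M ψ)ᶜ := by simp [sat]
  rw [Ob, Cond, mem_sat_succ_iff M (hpos ▸ hψ) (hneg ▸ hψc), hpos, hneg]

end Semantics

namespace DeltaModel

variable {α : Type} (M : DeltaModel α)

lemma S_eq_of_forall_symmDiff_subset {w b : Set α} {A : Set (Set α)} (hb : b ∈ A)
    (hmin : ∀ x ∈ A, symmDiff w b ⊆ symmDiff w x) : M.S w A = b := by
  have hA : A.Nonempty := ⟨b, hb⟩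
  have hS := M.S_mem w A hA
  by_contra hne
  refine M.delta w A hA ⟨b, hb, hmin _ hS, fun hsub => hne ?_⟩
  exact symmDiff_right_injective w (le_antisymm hsub (hmin _ hS))

lemma S_setOf_mem (w : Set α) (r : α) : M.S w {v | r ∈ v} = insert r w := by
  refine M.S_eq_of_forall_symmDiff_subset (mem_insert r w) fun x hx v hv => ?_
  simp only [mem_symmDiff, mem_insert_iff] at hv
  obtain ⟨rfl, hvw⟩ : v = r ∧ v ∉ w := by tauto
  exact mem_symmDiff.2 (Or.inr ⟨hx, hvw⟩)

lemma S_setOf_notMem (w : Set α) (r : α) : M.S w {v | r ∉ v} = w \ {r} := by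
  refine M.S_eq_of_forall_symmDiff_subset (by simp) fun x hx v hv => ?_
  simp only [mem_symmDiff, mem_sdiff, mem_singleton_iff] at hv
  obtain ⟨rfl, hvw⟩ : v = r ∧ v ∈ w := by tauto
  exact mem_symmDiff.2 (Or.inl ⟨hvw, hx⟩)

lemma sat_var_nonempty (r : α) : (sat M.toModel (var r)).Nonempty :=
  ⟨({r} : Set α), mem_singleton r⟩

lemma sat_neg_var_nonempty (r : α) : (sat M.toModel (neg (var r))).Nonempty :=
  ⟨(∅ : Set α), notMem_empty r⟩

lemma mem_sat_Ob_var_iff (p r : α) (w : Set α) :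
    w ∈ sat M.toModel (Ob p (var r)) ↔ M.U (w \ {r}) < M.U (insert r w) := by
  refine (mem_sat_Ob_iff _ p (M.sat_var_nonempty r) (M.sat_neg_var_nonempty r) w).trans ?_
  change M.U (M.S w {v | r ∉ v}) < M.U (M.S w {v | r ∈ v}) ↔ _
  rw [S_setOf_notMem, S_setOf_mem]

lemma mem_sat_succ_neg_var_iff (p q : α) (w : Set α) :
    w ∈ sat M.toModel (succ (neg (var p)) (neg (var q))) ↔ M.U (w \ {q}) < M.U (w \ {p}) := by
  refine (mem_sat_succ_iff _ (M.sat_neg_var_nonempty p) (M.sat_neg_var_nonempty q) w).trans ?_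
  change M.U (M.S w {v | q ∉ v}) < M.U (M.S w {v | p ∉ v}) ↔ _
  rw [S_setOf_notMem, S_setOf_notMem]

lemma U_diff_singleton_le_of_mem_sat_Ob_var {p r : α} {w : Set α}
    (h : w ∈ sat M.toModel (Ob p (var r))) : M.U (w \ {r}) ≤ M.U w := by
  rw [mem_sat_Ob_var_iff] at h
  by_cases hr : r ∈ w
  · rw [insert_eq_of_mem hr] at h
    exact h.le
  · rw [sdiff_singleton_eq_self hr]

end DeltaModel

open Fml in
theorem stmt_11_general {α : Type} (p q : α) (p0 : α) :
    DeltaImplies (conj (Ob p0 (var p)) (succ (neg (var p)) (neg (var q))))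
      (Ob p0 (var q)) := by
  rintro M (w : Set α) ⟨hOp, hpq⟩
  have hp : M.U (w \ {p}) ≤ M.U w := M.U_diff_singleton_le_of_mem_sat_Ob_var hOp
  replace hpq : M.U (w \ {q}) < M.U (w \ {p}) := (M.mem_sat_succ_neg_var_iff p q w).1 hpq
  have hq : q ∈ w := by
    by_contra hq
    rw [sdiff_singleton_eq_self hq] at hpq
    exact hpq.not_ge hp
  refine (M.mem_sat_Ob_var_iff p0 q w).2 ?_
  rw [insert_eq_of_mem hq]
  exact hpq.trans_le hp

open Fml in
theorem stmt_11 {α : Type} (p q : α) (hpq : p ≠ q) (p0 : α) :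
    DeltaImplies (conj (Ob p0 (var p)) (succ (neg (var p)) (neg (var q))))
      (Ob p0 (var q)) :=
  stmt_11_general p q p0
end

section
/- Let p and q be distinct sentential variables. Then Oq ∧ (p ≻ q) ⊨_Δ Op. -/
section Aux

open Fml

variable {α : Type}

lemma toModel_S {α : Type} (M : DeltaModel α) : (M.toModel).S = M.S := rfl

lemma sat_top (M : DeltaModel α) (p0 : α) :
    sat M.toModel (topF p0) = Set.univ := by
  simp [Fml.topF, Fml.impl, Fml.disj, sat]

lemma sat_succeq (M : DeltaModel α) (φ ψ : Fml α)
    (hφ : (sat M.toModel φ).Nonempty) (hψ : (sat M.toModel ψ).Nonempty) :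
    sat M.toModel (succeq φ ψ) =
      {w : Set α | M.U (M.S w (sat M.toModel φ)) ≥ M.U (M.S w (sat M.toModel ψ))} := by
  simp only [sat]
  rw [if_neg (not_or.mpr ⟨hφ.ne_empty, hψ.ne_empty⟩)]
  rfl

lemma sel_union (M : DeltaModel α) (w : Set α) (a : α) :
    M.S w {v : Set α | a ∈ v} = w ∪ {a} := by
  set A : Set (Set α) := {v : Set α | a ∈ v} with hA
  have hAne : A.Nonempty := ⟨Set.univ, by simp [hA]⟩
  have hs : M.S w A ∈ A := M.S_mem w A hAne
  have hd := M.delta w A hAne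
  push_neg at hd
  by_cases haw : a ∈ w
  · have h1 := hd w haw
    rw [symmDiff_self] at h1
    have h2 : symmDiff w (M.S w A) = (∅ : Set α) := by
      by_contra hne
      exact h1 ((Set.empty_ssubset).mpr (Set.nonempty_iff_ne_empty.mpr hne))
    have h3 : M.S w A = w := by
      have := symmDiff_eq_bot.mp h2
      exact this.symm
    rw [h3]
    exact (Set.union_eq_self_of_subset_right (Set.singleton_subset_iff.mpr haw)).symm
  · have hu : (w ∪ {a}) ∈ A := by simp [hA]
    have h1 := hd (w ∪ {a}) hu
    have hsd : symmDiff w (w ∪ {a}) = ({a} : Set α) := by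
      ext x
      simp only [Set.mem_symmDiff, Set.mem_union, Set.mem_singleton_iff]
      constructor
      · rintro (⟨hx, hn⟩ | ⟨hx | hx, hn⟩)
        · exact absurd (Or.inl hx) hn
        · exact absurd hx hn
        · exact hx
      · rintro rfl
        exact Or.inr ⟨Or.inr rfl, haw⟩
    rw [hsd] at h1
    have hsub : ({a} : Set α) ⊆ symmDiff w (M.S w A) := by
      intro x hx
      rw [Set.mem_singleton_iff] at hx
      subst hx
      exact Set.mem_symmDiff.mpr (Or.inr ⟨hs, haw⟩)
    have heq : symmDiff w (M.S w A) = ({a} : Set α) := by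
      by_contra hne
      exact h1 (hsub.ssubset_of_ne (Ne.symm hne))
    have := congrArg (fun t => symmDiff w t) heq
    simp only [symmDiff_symmDiff_cancel_left] at this
    rw [this]
    ext x
    simp only [Set.mem_symmDiff, Set.mem_union, Set.mem_singleton_iff]
    constructor
    · rintro (⟨hx, _⟩ | ⟨rfl, _⟩)
      · exact Or.inl hx
      · exact Or.inr rfl
    · rintro (hx | rfl)
      · exact Or.inl ⟨hx, fun h => haw (h ▸ hx)⟩
      · exact Or.inr ⟨rfl, haw⟩

lemma sel_diff (M : DeltaModel α) (w : Set α) (a : α) :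
    M.S w {v : Set α | a ∉ v} = w \ {a} := by
  set A : Set (Set α) := {v : Set α | a ∉ v} with hA
  have hAne : A.Nonempty := ⟨∅, by simp [hA]⟩
  have hs : M.S w A ∈ A := M.S_mem w A hAne
  have hd := M.delta w A hAne
  push_neg at hd
  by_cases haw : a ∈ w
  · have hu : (w \ {a}) ∈ A := by simp [hA]
    have h1 := hd (w \ {a}) hu
    have hsd : symmDiff w (w \ {a}) = ({a} : Set α) := by
      ext x
      simp only [Set.mem_symmDiff, Set.mem_diff, Set.mem_singleton_iff]
      constructor
      · rintro (⟨hx, hn⟩ | ⟨⟨hx, _⟩, hn⟩)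
        · by_contra hxa; exact hn ⟨hx, hxa⟩
        · exact absurd hx hn
      · rintro rfl
        exact Or.inl ⟨haw, fun h => h.2 rfl⟩
    rw [hsd] at h1
    have hsub : ({a} : Set α) ⊆ symmDiff w (M.S w A) := by
      intro x hx
      rw [Set.mem_singleton_iff] at hx
      subst hx
      exact Set.mem_symmDiff.mpr (Or.inl ⟨haw, hs⟩)
    have heq : symmDiff w (M.S w A) = ({a} : Set α) := by
      by_contra hne
      exact h1 (hsub.ssubset_of_ne (Ne.symm hne))
    have := congrArg (fun t => symmDiff w t) heq
    simp only [symmDiff_symmDiff_cancel_left] at this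
    rw [this]
    ext x
    simp only [Set.mem_symmDiff, Set.mem_diff, Set.mem_singleton_iff]
    constructor
    · rintro (⟨hx, hn⟩ | ⟨rfl, hn⟩)
      · exact ⟨hx, fun h => hn h⟩
      · exact absurd haw hn
    · rintro ⟨hx, hn⟩
      exact Or.inl ⟨hx, hn⟩
  · have h1 := hd w haw
    rw [symmDiff_self] at h1
    have h2 : symmDiff w (M.S w A) = (∅ : Set α) := by
      by_contra hne
      exact h1 ((Set.empty_ssubset).mpr (Set.nonempty_iff_ne_empty.mpr hne))
    have h3 : M.S w A = w := (symmDiff_eq_bot.mp h2).symm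
    rw [h3, Set.diff_singleton_eq_self haw]

end Aux

open Fml in
theorem stmt_12 {α : Type} (p q : α) (hpq : p ≠ q) (p0 : α) :
    DeltaImplies (conj (Ob p0 (var q)) (succ (var p) (var q)))
      (Ob p0 (var p)) := by
  intro M
  suffices h : ∀ w : Set α, w ∈ sat M.toModel (conj (Ob p0 (var q)) (succ (var p) (var q))) →
      w ∈ sat M.toModel (Ob p0 (var p)) by
    intro w hw
    exact h w hw
  intro w hw
  -- compute the four antecedent sets
  have hconj : ∀ (a : α), sat M.toModel (conj (topF p0) (var a)) = {v : Set α | a ∈ v} := by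
    intro a
    show sat M.toModel (topF p0) ∩ sat M.toModel (var a) = _
    rw [sat_top, Set.univ_inter]; rfl
  have hconjn : ∀ (a : α),
      sat M.toModel (conj (topF p0) (neg (var a))) = {v : Set α | a ∉ v} := by
    intro a
    show sat M.toModel (topF p0) ∩ (sat M.toModel (var a))ᶜ = _
    rw [sat_top, Set.univ_inter]; rfl
  have hvar : ∀ (a : α), sat M.toModel (var a) = {v : Set α | a ∈ v} := fun _ => rfl
  have hne1 : ∀ (a : α), ({v : Set α | a ∈ v} : Set (Set α)).Nonempty :=
    fun a => ⟨Set.univ, by simp⟩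
  have hne2 : ∀ (a : α), ({v : Set α | a ∉ v} : Set (Set α)).Nonempty :=
    fun a => ⟨∅, by simp⟩
  -- succeq evaluation helper
  have key : ∀ (φ ψ : Fml α) (A B : Set (Set α)),
      sat M.toModel φ = A → sat M.toModel ψ = B → A.Nonempty → B.Nonempty →
      sat M.toModel (succeq φ ψ) = {v : Set α | M.U (M.S v A) ≥ M.U (M.S v B)} := by
    intro φ ψ A B hA hB hAne hBne
    rw [sat_succeq M φ ψ (hA ▸ hAne) (hB ▸ hBne), hA, hB]
  have eq1 := key _ _ _ _ (hconj q) (hconjn q) (hne1 q) (hne2 q)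
  have eq2 := key _ _ _ _ (hconjn q) (hconj q) (hne2 q) (hne1 q)
  have eq3 := key _ _ _ _ (hvar p) (hvar q) (hne1 p) (hne1 q)
  have eq4 := key _ _ _ _ (hvar q) (hvar p) (hne1 q) (hne1 p)
  have eq5 := key _ _ _ _ (hconj p) (hconjn p) (hne1 p) (hne2 p)
  have eq6 := key _ _ _ _ (hconjn p) (hconj p) (hne2 p) (hne1 p)
  obtain ⟨⟨hOq1, hOq2⟩, hpq1, hpq2⟩ :
      (w ∈ sat M.toModel (succeq (conj (topF p0) (var q)) (conj (topF p0) (neg (var q)))) ∧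
        w ∈ (sat M.toModel (succeq (conj (topF p0) (neg (var q))) (conj (topF p0) (var q))))ᶜ) ∧
      w ∈ sat M.toModel (succeq (var p) (var q)) ∧
        w ∈ (sat M.toModel (succeq (var q) (var p)))ᶜ := hw
  rw [eq1] at hOq1
  rw [eq2] at hOq2
  rw [eq3] at hpq1
  rw [eq4] at hpq2
  simp only [Set.mem_setOf_eq, sel_union, sel_diff] at hOq1 hOq2 hpq1 hpq2
  -- F1 : U (w \ {q}) < U (w ∪ {q}),  F2 : U (w ∪ {q}) < U (w ∪ {p})
  have F1 : M.U (w \ {q}) < M.U (w ∪ {q}) := lt_of_not_ge hOq2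
  have F2 : M.U (w ∪ {q}) < M.U (w ∪ {p}) := lt_of_not_ge hpq2
  have hpnw : p ∉ (w : Set α) := by
    intro hpw
    have hwp : (w : Set α) ∪ {p} = w :=
      Set.union_eq_self_of_subset_right (Set.singleton_subset_iff.mpr hpw)
    by_cases hqw : q ∈ (w : Set α)
    · have hwq : (w : Set α) ∪ {q} = w :=
        Set.union_eq_self_of_subset_right (Set.singleton_subset_iff.mpr hqw)
      rw [hwq, hwp] at F2
      exact lt_irrefl _ F2
    · have hwq : w \ {q} = w := Set.diff_singleton_eq_self hqw
      rw [hwq] at F1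
      rw [hwp] at F2
      exact lt_irrefl _ (F1.trans F2)
  have hgoal : M.U ((w : Set α) \ {p}) < M.U (w ∪ {p}) := by
    rw [Set.diff_singleton_eq_self hpnw]
    by_cases hqw : q ∈ (w : Set α)
    · have hwq : (w : Set α) ∪ {q} = w :=
        Set.union_eq_self_of_subset_right (Set.singleton_subset_iff.mpr hqw)
      rw [hwq] at F2
      exact F2
    · have hwq : (w : Set α) \ {q} = w := Set.diff_singleton_eq_self hqw
      rw [hwq] at F1
      exact F1.trans F2
  refine ⟨?_, ?_⟩
  · show w ∈ sat M.toModel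
      (succeq (conj (topF p0) (var p)) (conj (topF p0) (neg (var p))))
    rw [eq5]
    show M.U (M.S w {v : Set α | p ∈ v}) ≥ M.U (M.S w {v : Set α | p ∉ v})
    rw [sel_union, sel_diff]
    exact hgoal.le
  · show w ∈ (sat M.toModel
      (succeq (conj (topF p0) (neg (var p))) (conj (topF p0) (var p))))ᶜ
    rw [eq6]
    show ¬ (M.U (M.S w {v : Set α | p ∉ v}) ≥ M.U (M.S w {v : Set α | p ∈ v}))
    rw [sel_union, sel_diff]
    exact not_le.mpr hgoal
end

section
/- Let p, q, r be pairwise distinct sentential variables. Then C(p,q) ⊨_Δ C(p∧r, q) ∨ C(p∧¬r, q). -/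
/-!
In a Δ model the selection from a set of worlds fixed by literals ("p ∧ q", "p ∧ ¬q") is the
world obtained from w by the fewest flips: w ∪ {p, q}, resp. (w ∪ {p}) \ {q}. Neither flip touches
r, so both worlds agree with w on r. Strengthening the antecedent p by whichever of r, ¬r holds
at w therefore leaves both selections, hence the strict preference, unchanged.
-/

open Fml

variable {α : Type}

/-- `m` is the least, not merely a minimal, element of `A` in the Δ-order around `w`. -/
def IsClosest (w : Set α) (A : Set (Set α)) (m : Set α) : Prop :=
  m ∈ A ∧ ∀ t ∈ A, symmDiff w m ⊆ symmDiff w t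

lemma IsClosest.mono {w m : Set α} {A B : Set (Set α)} (h : IsClosest w A m) (hBA : B ⊆ A)
    (hm : m ∈ B) : IsClosest w B m :=
  ⟨hm, fun t ht => h.2 t (hBA ht)⟩

lemma isClosest_of_forall_mem_iff (w : Set α) {A : Set (Set α)} {P N : Set α}
    (hPN : Disjoint P N) (hA : ∀ t, t ∈ A ↔ P ⊆ t ∧ Disjoint t N) :
    IsClosest w A ((w ∪ P) \ N) := by
  refine ⟨(hA _).2 ⟨fun x hx => ⟨Or.inr hx, hPN.notMem_of_mem_left hx⟩,
    Set.disjoint_sdiff_left⟩, fun t ht x hx => ?_⟩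
  obtain ⟨hPt, htN⟩ := (hA t).1 ht
  rcases Set.mem_symmDiff.1 hx with ⟨hxw, hxm⟩ | ⟨hxm, hxw⟩
  · have hxN : x ∈ N := by_contra fun h => hxm ⟨Or.inl hxw, h⟩
    exact Set.mem_symmDiff.2 (Or.inl ⟨hxw, htN.notMem_of_mem_right hxN⟩)
  · exact Set.mem_symmDiff.2 (Or.inr ⟨hPt (hxm.1.resolve_left hxw), hxw⟩)

lemma DeltaModel.S_eq_of_isClosest (M : DeltaModel α) {w m : Set α} {A : Set (Set α)}
    (h : IsClosest w A m) : M.toModel.S w A = m := by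
  have hA : A.Nonempty := ⟨m, h.1⟩
  have hle := h.2 _ (M.S_mem w A hA)
  by_contra hne
  refine M.delta w A hA ⟨m, h.1, hle, fun hge => hne ?_⟩
  exact symmDiff_right_injective w (hle.antisymm hge).symm

@[simp] lemma DeltaModel.mem_sat_var (M : DeltaModel α) (p : α) (w : Set α) :
    w ∈ sat M.toModel (var p) ↔ p ∈ w := Iff.rfl

@[simp] lemma DeltaModel.mem_sat_neg (M : DeltaModel α) (φ : Fml α) (w : Set α) :
    w ∈ sat M.toModel (neg φ) ↔ w ∉ sat M.toModel φ := Iff.rfl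

@[simp] lemma DeltaModel.mem_sat_conj (M : DeltaModel α) (φ ψ : Fml α) (w : Set α) :
    w ∈ sat M.toModel (conj φ ψ) ↔ w ∈ sat M.toModel φ ∧ w ∈ sat M.toModel ψ := Iff.rfl

lemma mem_sat_disj (M : Model α) (φ ψ : Fml α) (w : M.W) :
    w ∈ sat M (disj φ ψ) ↔ w ∈ sat M φ ∨ w ∈ sat M ψ := by
  simp [disj, sat, or_iff_not_and_not]

lemma sat_succeq_of_nonempty (M : Model α) {φ ψ : Fml α} (hφ : (sat M φ).Nonempty)
    (hψ : (sat M ψ).Nonempty) :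
    sat M (succeq φ ψ) = {w | M.U (M.S w (sat M ψ)) ≤ M.U (M.S w (sat M φ))} := by
  rw [sat, if_neg (not_or.2 ⟨hφ.ne_empty, hψ.ne_empty⟩)]

lemma mem_sat_Cond_iff (M : Model α) {φ ψ : Fml α} (hpos : (sat M (conj φ ψ)).Nonempty)
    (hneg : (sat M (conj φ (neg ψ))).Nonempty) (w : M.W) :
    w ∈ sat M (Cond φ ψ) ↔
      M.U (M.S w (sat M (conj φ (neg ψ)))) < M.U (M.S w (sat M (conj φ ψ))) := by
  rw [lt_iff_le_not_ge]
  exact Iff.and (by rw [sat_succeq_of_nonempty M hpos hneg]; rfl)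
    (not_congr (by rw [sat_succeq_of_nonempty M hneg hpos]; rfl))

lemma DeltaModel.mem_sat_Cond_conj (M : DeltaModel α) {φ ψ χ : Fml α} {w a b : Set α}
    (ha : IsClosest w (sat M.toModel (conj φ ψ)) a)
    (hb : IsClosest w (sat M.toModel (conj φ (neg ψ))) b)
    (haχ : a ∈ sat M.toModel χ) (hbχ : b ∈ sat M.toModel χ)
    (hw : w ∈ sat M.toModel (Cond φ ψ)) : w ∈ sat M.toModel (Cond (conj φ χ) ψ) := by
  have ha' : IsClosest w (sat M.toModel (conj (conj φ χ) ψ)) a :=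
    ha.mono (fun t ht => ⟨ht.1.1, ht.2⟩) ⟨⟨ha.1.1, haχ⟩, ha.1.2⟩
  have hb' : IsClosest w (sat M.toModel (conj (conj φ χ) (neg ψ))) b :=
    hb.mono (fun t ht => ⟨ht.1.1, ht.2⟩) ⟨⟨hb.1.1, hbχ⟩, hb.1.2⟩
  have hU := (mem_sat_Cond_iff M.toModel ⟨a, ha.1⟩ ⟨b, hb.1⟩ w).1 hw
  rw [M.S_eq_of_isClosest ha, M.S_eq_of_isClosest hb] at hU
  refine (mem_sat_Cond_iff M.toModel ⟨a, ha'.1⟩ ⟨b, hb'.1⟩ w).2 ?_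
  rwa [M.S_eq_of_isClosest ha', M.S_eq_of_isClosest hb']

open Fml in
theorem stmt_15 {α : Type} (p q r : α) (hpq : p ≠ q) (hpr : p ≠ r) (hqr : q ≠ r) :
    DeltaImplies (Cond (var p) (var q))
      (disj (Cond (conj (var p) (var r)) (var q))
            (Cond (conj (var p) (neg (var r))) (var q))) := by
  intro M (w : Set α) hw
  have ha : IsClosest w (sat M.toModel (conj (var p) (var q))) ((w ∪ {p, q}) \ ∅) :=
    isClosest_of_forall_mem_iff w (Set.disjoint_empty _) fun t => by
      -- restate membership at type `M.toModel.W`, the form the `DeltaModel.mem_sat_*` lemmas match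
      show t ∈ sat M.toModel _ ↔ _
      simp [Set.insert_subset_iff]
  have hb : IsClosest w (sat M.toModel (conj (var p) (neg (var q)))) ((w ∪ {p}) \ {q}) :=
    isClosest_of_forall_mem_iff w (Set.disjoint_singleton.2 hpq) fun t => by
      show t ∈ sat M.toModel _ ↔ _
      simp
  refine (mem_sat_disj M.toModel _ _ w).2 ?_
  by_cases hr : r ∈ w
  · exact Or.inl (M.mem_sat_Cond_conj ha hb (by simp [hr]) (by simp [hr, hqr.symm]) hw)
  · exact Or.inr (M.mem_sat_Cond_conj ha hb (by simp [hr, hpr.symm, hqr.symm])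
      (by simp [hr, hpr.symm]) hw)
end
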